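/- With the notation of the Trimmed form: let Dem be the mould equal to (1 − e^{−λ·m})^{−1} on each one-letter word (m) with m non-resonant and 0 on all other words, and Sem := e^Δ(Exp Dem)·(Exp I)·(Exp(−Dem)). Assume that for every word 𝐦 the sequence r ↦ ([Sem − 1^•]^{(∘r)})^𝐦 is eventually constant, and let Trem := 1^• + limstat_{r→∞}[Sem − 1^•]^{(∘r)}. Then the mould Trem satisfies the fixed-point identities Sem ∘ Trem = Trem and Trem ∘ Sem = Trem. -/

import Mathlib

/- A mould on an alphabet `A` is a function from words (lists) over `A` to `ℂ`. -/
noncomputable section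

abbrev Mould (A : Type*) := List A → ℂ

/-- The unit mould `1^•`: equal to `1` on the empty word and `0` elsewhere. -/
def mone {A : Type*} : Mould A
  | [] => 1
  | _ :: _ => 0

/-- The mould product `(M·N)^𝐚 = Σ_{𝐚¹𝐚²=𝐚} M^{𝐚¹} N^{𝐚²}`. -/
def mprod {A : Type*} (M N : Mould A) : Mould A :=
  fun a => ∑ i ∈ Finset.range (a.length + 1), M (a.take i) * N (a.drop i)

/-- `[M]_{(×n)}`: the `n`-fold mould product of `M` with itself, `[M]_{(×0)} = 1^•`. -/
def mpow {A : Type*} (M : Mould A) : ℕ → Mould A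
  | 0 => mone
  | n + 1 => mprod M (mpow M n)

/-- The mould exponential `Exp M = Σ_{n≥0} [M]_{(×n)}/n!`; on a word `𝐚` the sum is
finite since (for `M^∅ = 0`) the terms with `n > l(𝐚)` vanish. -/
def mExp {A : Type*} (M : Mould A) : Mould A :=
  fun a => ∑ n ∈ Finset.range (a.length + 1), (n.factorial : ℂ)⁻¹ * mpow M n a

/-- The mould logarithm `Log M = Σ_{n≥1} (−1)^{n+1}[M]_{(×n)}/n`; on a word `𝐚` the sum is
finite since (for `M^∅ = 0`) the terms with `n > l(𝐚)` vanish. -/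
def mLog {A : Type*} (M : Mould A) : Mould A :=
  fun a => ∑ n ∈ Finset.Icc 1 a.length, (-1 : ℂ) ^ (n + 1) * (n : ℂ)⁻¹ * mpow M n a
/-- The mould `I^•`: equal to `1` on words of length `1` and `0` elsewhere. -/
def mI {A : Type*} : Mould A
  | [_] => 1
  | _ => 0

/-- Given a weight `ω : A → ℂ` extended additively to words, the operator `e^Δ` on
moulds is `(e^Δ M)^𝐦 = e^{−ω(𝐦)}·M^𝐦`. -/
def eDelta {A : Type*} (ω : A → ℂ) (M : Mould A) : Mould A :=
  fun a => Complex.exp (-(a.map ω).sum) * M a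

/-- The sum `‖𝐚‖ = a_1 + ⋯ + a_r ∈ A` of the letters of a nonempty word
(`none` on the empty word). -/
def blockSum {A : Type*} [Add A] : List A → Option A
  | [] => none
  | x :: t => some (t.foldl (· + ·) x)

/-- Mould composition: `(M∘N)^𝐚 = Σ_k Σ_{𝐚¹⋯𝐚ᵏ=𝐚, 𝐚ⁱ≠∅} M^{‖𝐚¹‖⋯‖𝐚ᵏ‖}·N^{𝐚¹}⋯N^{𝐚ᵏ}`,
the sum ranging over decompositions of `𝐚` into nonempty consecutive blocks
(in particular `(M∘N)^∅ = M^∅`). -/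
def mcomp {A : Type*} [Add A] (M N : Mould A) : Mould A := fun a =>
  ∑ c : Composition a.length,
    M (((a.splitWrtComposition c).map blockSum).reduceOption) *
      ((a.splitWrtComposition c).map N).prod

/-- Iterated self-composition: `iterComp X r = X^{(∘(r+1))}`, i.e.
`X^{(∘1)} = X` and `X^{(∘(r+1))} = X ∘ X^{(∘r)}`. -/
def iterComp {A : Type*} [Add A] (X : Mould A) : ℕ → Mould A
  | 0 => X
  | r + 1 => mcomp X (iterComp X r)

/-- The alphabet `A = {m ∈ ℤ^ν : m_1 + ⋯ + m_ν ≥ 1}`. -/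
def Alpha (ν : ℕ) : Type := {m : Fin ν → ℤ // 1 ≤ ∑ i, m i}

/-- `A` is a semigroup under componentwise addition. -/
instance {ν : ℕ} : Add (Alpha ν) :=
  ⟨fun a b => ⟨a.1 + b.1, by
    have ha := a.2
    have hb := b.2
    simp only [Pi.add_apply, Finset.sum_add_distrib]
    linarith⟩⟩

instance {ν : ℕ} : AddSemigroup (Alpha ν) where
  add_assoc a b c := Subtype.ext (add_assoc a.1 b.1 c.1)

/-- `λ·m = Σ_i λ_i m_i` for a letter `m`. -/
def dot {ν : ℕ} (lam : Fin ν → ℂ) (m : Alpha ν) : ℂ := ∑ i, lam i * (m.1 i : ℂ)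

/-- `‖𝐦‖ = m_1 + ⋯ + m_r ∈ ℤ^ν` for a word `𝐦` over `Alpha ν`. -/
def wnorm {ν : ℕ} (a : List (Alpha ν)) : Fin ν → ℤ := (a.map Subtype.val).sum

open scoped Classical in
/-- The mould `Dem`: equal to `(1 − e^{−λ·m})⁻¹` on one-letter words `(m)` with `m`
non-resonant (i.e. `e^{λ·m} ≠ 1`) and `0` on all other words. -/
def Dem {ν : ℕ} (lam : Fin ν → ℂ) : Mould (Alpha ν) := fun a =>
  match a with
  | [m] => if Complex.exp (dot lam m) = 1 then 0
           else (1 - Complex.exp (-dot lam m))⁻¹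
  | _ => 0

/-- The mould `Sem := e^Δ(Exp Dem)·(Exp I)·(Exp(−Dem))` of the simplified form,
with weight `ω(m) = λ·m`. -/
def Sem {ν : ℕ} (lam : Fin ν → ℂ) : Mould (Alpha ν) :=
  mprod (eDelta (dot lam) (mExp (Dem lam)))
    (mprod (mExp mI) (mExp fun a => -Dem lam a))

/-!
Write `Sem = 1^• + X` with `X = Sem − 1^•`. On a nonempty word all blocks of a decomposition,
and the word of their sums, are nonempty, so `(1^• + M) ∘ (1^• + N) = 1^• + M ∘ N`. Hence
`Sem ∘ (1^• + X^{(∘r)}) = 1^• + X^{(∘r+1)}`, and since composition is associative over a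
semigroup alphabet (reindexing by `Composition.sigmaEquivSigmaPi`, as for formal multilinear
series), also `(1^• + X^{(∘r)}) ∘ Sem = 1^• + X^{(∘r)} ∘ X = 1^• + X^{(∘r+1)}`. The value of a
composition on a word involves only finitely many values of its arguments, so on each word both
identities pass to the stationary limit `r → ∞`.
-/

namespace List

variable {α : Type*} {m : ℕ}

theorem splitWrtComposition_eq_of_flatten_eq {l : List α} {c : Composition m}
    {L : List (List α)} (hf : L.flatten = l) (hb : L.map length = c.blocks) :
    l.splitWrtComposition c = L := by
  subst hf
  have hm : m = L.flatten.length := by rw [length_flatten, hb, c.blocks_sum]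
  exact splitWrtComposition_flatten L (c.cast hm) hb

theorem flatten_splitWrtComposition_of_eq (l : List α) (c : Composition m)
    (h : m = l.length) : (l.splitWrtComposition c).flatten = l :=
  flatten_splitWrtComposition l (c.cast h)

theorem map_length_splitWrtComposition_of_eq (l : List α) (c : Composition m)
    (h : m = l.length) : (l.splitWrtComposition c).map length = c.blocks :=
  map_length_splitWrtComposition l (c.cast h)

theorem ne_nil_of_mem_splitWrtComposition {l t : List α} {c : Composition m}
    (h : m = l.length) (ht : t ∈ l.splitWrtComposition c) : t ≠ [] :=
  ne_nil_of_length_pos (length_pos_of_mem_splitWrtComposition (c := c.cast h) ht)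

theorem ofFn_getElem_of_eq {n : ℕ} {l : List α} (h : n = l.length)
    (hi : ∀ i : Fin n, i.1 < l.length) : ofFn (fun i : Fin n => l[i.1]'(hi i)) = l := by
  subst h
  exact ofFn_getElem

def splitBlock (l : List α) (c : Composition m) (i : Fin c.length) : List α :=
  (l.splitWrtComposition c)[i.1]'(by simp)

theorem ofFn_splitBlock (l : List α) (c : Composition m) :
    ofFn (l.splitBlock c) = l.splitWrtComposition c :=
  ofFn_getElem_of_eq (by simp) _

theorem length_splitBlock {l : List α} {c : Composition m} (h : m = l.length)
    (i : Fin c.length) : (l.splitBlock c i).length = c.blocksFun i := by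
  rw [splitBlock, getElem_map_rev length,
    getElem_of_eq (map_length_splitWrtComposition_of_eq l c h)]
  rfl

theorem prod_map_splitWrtComposition {M : Type*} [CommMonoid M] (l : List α)
    (c : Composition m) (f : List α → M) :
    ((l.splitWrtComposition c).map f).prod = ∏ i, f (l.splitBlock c i) := by
  rw [← ofFn_splitBlock, map_ofFn, prod_ofFn]
  rfl

end List

section BlockSums

open List

variable {A : Type*}

/-- The word `‖𝐚¹‖⋯‖𝐚ᵏ‖` of block sums (empty blocks contribute no letter). -/
def blockSums [Add A] (L : List (List A)) : List A := (L.map blockSum).reduceOption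

theorem blockSums_append [Add A] (L₁ L₂ : List (List A)) :
    blockSums (L₁ ++ L₂) = blockSums L₁ ++ blockSums L₂ := by
  simp only [blockSums, map_append, reduceOption_append]

theorem blockSums_flatten [Add A] (S : List (List (List A))) :
    blockSums S.flatten = (S.map blockSums).flatten := by
  induction S with
  | nil => rfl
  | cons L S ih => rw [flatten_cons, blockSums_append, ih, map_cons, flatten_cons]

theorem length_blockSums [Add A] {L : List (List A)} (h : ∀ l ∈ L, l ≠ []) :
    (blockSums L).length = L.length := by
  rw [blockSums, reduceOption_length_eq_iff.2, length_map]
  simp only [mem_map, forall_exists_index, and_imp, forall_apply_eq_imp_iff₂]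
  intro l hl
  cases l with
  | nil => exact absurd rfl (h [] hl)
  | cons x t => rfl

theorem length_blockSums_splitWrtComposition [Add A] {m : ℕ} {l : List A} {c : Composition m}
    (h : m = l.length) : (blockSums (l.splitWrtComposition c)).length = c.length := by
  rw [length_blockSums fun _ ht => ne_nil_of_mem_splitWrtComposition h ht,
    length_splitWrtComposition]

theorem blockSum_append [AddSemigroup A] (l₁ l₂ : List A) :
    blockSum (l₁ ++ l₂) = Option.merge (· + ·) (blockSum l₁) (blockSum l₂) := by
  match l₁, l₂ with
  | [], _ => simp [blockSum]
  | _ :: _, [] => simp [blockSum]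
  | x :: t, y :: u =>
    simp only [cons_append, blockSum, foldl_append, foldl_cons, Option.merge]
    rw [foldl_assoc]

theorem blockSum_blockSums [AddSemigroup A] (L : List (List A)) :
    blockSum (blockSums L) = blockSum L.flatten := by
  induction L with
  | nil => rfl
  | cons l L ih =>
    rw [flatten_cons, blockSum_append, ← ih]
    cases h : blockSum l with
    | none => simp [blockSums, h]
    | some s =>
      rw [show blockSums (l :: L) = [s] ++ blockSums L by simp [blockSums, h], blockSum_append]
      rfl

end BlockSums

section Gather

open List Composition

variable {A : Type*} (a : List A) (c : Composition a.length) (d : Composition c.length)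

theorem blocks_sigmaCompositionAux (i : Fin (c.gather d).length) :
    (c.sigmaCompositionAux d i).blocks = (c.blocks.splitWrtComposition d)[i.1]'(by
      rw [length_splitWrtComposition, ← length_gather]; exact i.2) := rfl

theorem length_splitBlock_gather (i : Fin (c.gather d).length) :
    (c.gather d).blocksFun i = (a.splitBlock (c.gather d) i).length :=
  (length_splitBlock rfl i).symm

/-- Splitting along `c` is splitting along `c.gather d`, then each block along the
corresponding subcomposition of `c`. -/
theorem splitWrtComposition_eq_flatten_gather :
    a.splitWrtComposition c = (ofFn fun i =>
      (a.splitBlock (c.gather d) i).splitWrtComposition (c.sigmaCompositionAux d i)).flatten := by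
  apply splitWrtComposition_eq_of_flatten_eq
  · rw [flatten_flatten, map_ofFn]
    simp only [Function.comp_def, fun i => flatten_splitWrtComposition_of_eq _ _
      (length_splitBlock_gather a c d i), ofFn_splitBlock, flatten_splitWrtComposition]
  · rw [map_flatten, map_ofFn]
    simp only [Function.comp_def, fun i => map_length_splitWrtComposition_of_eq _ _
      (length_splitBlock_gather a c d i), blocks_sigmaCompositionAux]
    rw [ofFn_getElem_of_eq (by rw [length_splitWrtComposition, length_gather]),
      flatten_splitWrtComposition_of_eq _ _ c.blocks_length.symm]

theorem splitWrtComposition_blockSums_eq_ofFn_gather [Add A] :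
    (blockSums (a.splitWrtComposition c)).splitWrtComposition d = ofFn fun i =>
      blockSums ((a.splitBlock (c.gather d) i).splitWrtComposition
        (c.sigmaCompositionAux d i)) := by
  apply splitWrtComposition_eq_of_flatten_eq
  · rw [splitWrtComposition_eq_flatten_gather a c d, blockSums_flatten, map_ofFn]
    rfl
  · have hi : ∀ i : Fin (c.gather d).length, i.1 < d.blocks.length := fun i => by
      rw [blocks_length, ← length_gather]; exact i.2
    have hlen : ∀ i : Fin (c.gather d).length, (blockSums ((a.splitBlock (c.gather d) i)
        |>.splitWrtComposition (c.sigmaCompositionAux d i))).length = d.blocks[i.1]'(hi i) := by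
      intro i
      rw [length_blockSums_splitWrtComposition (length_splitBlock_gather a c d i),
        Composition.length, blocks_sigmaCompositionAux, getElem_map_rev List.length,
        getElem_of_eq (map_length_splitWrtComposition_of_eq _ d c.blocks_length.symm)]
    rw [map_ofFn, Function.comp_def]
    simp only [hlen]
    exact ofFn_getElem_of_eq (by rw [blocks_length, length_gather]) hi

theorem blockSums_splitWrtComposition_blockSums [AddSemigroup A] :
    blockSums ((blockSums (a.splitWrtComposition c)).splitWrtComposition d)
      = blockSums (a.splitWrtComposition (c.gather d)) := by
  have hblock : ∀ i, blockSum (blockSums ((a.splitBlock (c.gather d) i).splitWrtComposition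
      (c.sigmaCompositionAux d i))) = blockSum (a.splitBlock (c.gather d) i) := fun i => by
    rw [blockSum_blockSums,
      flatten_splitWrtComposition_of_eq _ _ (length_splitBlock_gather a c d i)]
  rw [splitWrtComposition_blockSums_eq_ofFn_gather, ← ofFn_splitBlock, blockSums, blockSums,
    map_ofFn, map_ofFn, Function.comp_def, Function.comp_def]
  simp only [hblock]

end Gather

section Associativity

open List Composition

variable {A : Type*}

theorem mcomp_apply [Add A] (M N : Mould A) (a : List A) :
    mcomp M N a = ∑ c : Composition a.length,
      M (blockSums (a.splitWrtComposition c)) * ((a.splitWrtComposition c).map N).prod :=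
  rfl

theorem mcomp_apply_of_eq [Add A] (M N : Mould A) {a : List A} {m : ℕ} (h : m = a.length) :
    mcomp M N a = ∑ c : Composition m,
      M (blockSums (a.splitWrtComposition c)) * ((a.splitWrtComposition c).map N).prod := by
  subst h
  rfl

theorem mcomp_mcomp_apply [Add A] (M N P : Mould A) (a : List A) :
    mcomp (mcomp M N) P a = ∑ p : Σ c : Composition a.length, Composition c.length,
      M (blockSums ((blockSums (a.splitWrtComposition p.1)).splitWrtComposition p.2)) *
        (((blockSums (a.splitWrtComposition p.1)).splitWrtComposition p.2).map N).prod *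
        ((a.splitWrtComposition p.1).map P).prod := by
  rw [mcomp_apply, Fintype.sum_sigma]
  refine Fintype.sum_congr _ _ fun c => ?_
  rw [mcomp_apply_of_eq M N (length_blockSums_splitWrtComposition rfl).symm, Finset.sum_mul]

theorem mcomp_mcomp_apply' [Add A] (M N P : Mould A) (a : List A) :
    mcomp M (mcomp N P) a =
      ∑ q : Σ c : Composition a.length, ∀ i, Composition (c.blocksFun i),
        M (blockSums (a.splitWrtComposition q.1)) * ∏ i,
          N (blockSums ((a.splitBlock q.1 i).splitWrtComposition (q.2 i))) *
            (((a.splitBlock q.1 i).splitWrtComposition (q.2 i)).map P).prod := by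
  rw [mcomp_apply, Fintype.sum_sigma]
  refine Fintype.sum_congr _ _ fun c => ?_
  simp only [prod_map_splitWrtComposition,
    fun i => mcomp_apply_of_eq N P (length_splitBlock (c := c) rfl i).symm]
  rw [Fintype.prod_sum, Finset.mul_sum]

theorem mcomp_assoc [AddSemigroup A] (M N P : Mould A) :
    mcomp (mcomp M N) P = mcomp M (mcomp N P) := by
  funext a
  rw [mcomp_mcomp_apply, mcomp_mcomp_apply']
  refine Fintype.sum_equiv (sigmaEquivSigmaPi a.length) _ _ fun ⟨c, d⟩ => ?_
  rw [blockSums_splitWrtComposition_blockSums, splitWrtComposition_blockSums_eq_ofFn_gather,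
    splitWrtComposition_eq_flatten_gather a c d, map_ofFn, prod_ofFn, map_flatten, map_ofFn,
    prod_flatten, map_ofFn, prod_ofFn, mul_assoc, ← Finset.prod_mul_distrib]
  rfl

end Associativity

section FixedPoint

open List Filter

variable {A : Type*}

theorem mcomp_nil [Add A] (M N : Mould A) : mcomp M N [] = M [] := by
  have hsplit : ∀ c : Composition 0, ([] : List A).splitWrtComposition c = [] := fun c => by
    rw [splitWrtComposition, c.blocks_eq_nil.2 rfl]
    rfl
  rw [mcomp_apply_of_eq M N (a := []) (m := 0) rfl]
  simp [hsplit, blockSums, composition_card]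

theorem mone_apply_of_ne_nil {w : List A} (h : w ≠ []) : mone w = 0 := by
  cases w with
  | nil => exact absurd rfl h
  | cons _ _ => rfl

theorem mcomp_apply_congr [Add A] {M M' N N' : Mould A} {a : List A}
    (hM : ∀ c : Composition a.length,
      M (blockSums (a.splitWrtComposition c)) = M' (blockSums (a.splitWrtComposition c)))
    (hN : ∀ c : Composition a.length, ∀ w ∈ a.splitWrtComposition c, N w = N' w) :
    mcomp M N a = mcomp M' N' a := by
  rw [mcomp_apply, mcomp_apply]
  exact Fintype.sum_congr _ _ fun c => by rw [hM c, map_congr_left (hN c)]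

theorem mcomp_one_add_one_add [Add A] (M N : Mould A) :
    mcomp (mone + M) (mone + N) = mone + mcomp M N := by
  funext a
  rcases eq_or_ne a [] with rfl | ha
  · simp only [mcomp_nil, Pi.add_apply]
  have hpos : 0 < a.length := length_pos_of_ne_nil ha
  rw [Pi.add_apply, mone_apply_of_ne_nil ha, zero_add]
  refine mcomp_apply_congr (fun c => ?_) fun c w hw => ?_
  · have hne : blockSums (a.splitWrtComposition c) ≠ [] := ne_nil_of_length_pos <| by
      rw [length_blockSums_splitWrtComposition rfl]; exact c.length_pos_of_pos hpos
    rw [Pi.add_apply, mone_apply_of_ne_nil hne, zero_add]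
  · rw [Pi.add_apply, mone_apply_of_ne_nil (ne_nil_of_mem_splitWrtComposition rfl hw), zero_add]

theorem mcomp_iterComp [AddSemigroup A] (X : Mould A) (r : ℕ) :
    mcomp (iterComp X r) X = iterComp X (r + 1) := by
  induction r with
  | zero => rfl
  | succ r ih => exact (mcomp_assoc _ _ _).trans (congrArg (mcomp X) ih)

theorem eventually_mcomp_apply_eq [Add A] {ι : Type*} {l : Filter ι} {M N : Mould A}
    {F G : ι → Mould A} (hM : ∀ w, ∀ᶠ i in l, M w = F i w) (hN : ∀ w, ∀ᶠ i in l, N w = G i w)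
    (a : List A) : ∀ᶠ i in l, mcomp M N a = mcomp (F i) (G i) a := by
  have hM' : ∀ᶠ i in l, ∀ c : Composition a.length,
      M (blockSums (a.splitWrtComposition c)) = F i (blockSums (a.splitWrtComposition c)) :=
    eventually_all.2 fun c => hM _
  have hN' : ∀ᶠ i in l, ∀ c : Composition a.length, ∀ w ∈ a.splitWrtComposition c,
      N w = G i w :=
    eventually_all.2 fun c => ((a.splitWrtComposition c).finite_toSet.eventually_all).2
      fun w _ => hN w
  filter_upwards [hM', hN'] with i hMi hNi using mcomp_apply_congr hMi hNi

end FixedPoint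

theorem trem_fixed_point_general {ν : ℕ} (lam : Fin ν → ℂ)
    (Trem : Mould (Alpha ν))
    (hTrem : ∀ a : List (Alpha ν), ∃ R : ℕ, ∀ r : ℕ, R ≤ r →
        Trem a = mone a + iterComp (fun b => Sem lam b - mone b) r a) :
    mcomp (Sem lam) Trem = Trem ∧ mcomp Trem (Sem lam) = Trem := by
  set X : Mould (Alpha ν) := fun b => Sem lam b - mone b
  have hSem : Sem lam = mone + X := funext fun b => (add_sub_cancel (mone b) (Sem lam b)).symm
  have hlim : ∀ w, ∀ᶠ r in Filter.atTop, Trem w = (mone + iterComp X r : Mould (Alpha ν)) w :=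
    fun w => let ⟨R, hR⟩ := hTrem w; Filter.eventually_atTop.2 ⟨R, hR⟩
  have hlim_succ :
      ∀ w, ∀ᶠ r in Filter.atTop, Trem w = (mone + iterComp X (r + 1) : Mould (Alpha ν)) w :=
    fun w => (Filter.tendsto_add_atTop_nat 1).eventually (hlim w)
  have hSem_const : ∀ w, ∀ᶠ _ : ℕ in Filter.atTop, Sem lam w = Sem lam w :=
    fun _ => Filter.Eventually.of_forall fun _ => rfl
  constructor <;> funext a
  · obtain ⟨r, hcomp, hT⟩ :=
      ((eventually_mcomp_apply_eq hSem_const hlim a).and (hlim_succ a)).exists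
    rw [hcomp, hT, hSem, mcomp_one_add_one_add]
    rfl
  · obtain ⟨r, hcomp, hT⟩ :=
      ((eventually_mcomp_apply_eq hlim hSem_const a).and (hlim_succ a)).exists
    rw [hcomp, hT, hSem, mcomp_one_add_one_add, mcomp_iterComp]

/-- Assuming the sequence of iterated self-compositions of `Sem − 1^•` is eventually
constant on every word, the mould `Trem := 1^• + limstat_{r→∞}[Sem − 1^•]^{(∘r)}`
satisfies the fixed-point identities `Sem ∘ Trem = Trem` and `Trem ∘ Sem = Trem`. -/
theorem trem_fixed_point {ν : ℕ} (hν : 1 ≤ ν) (lam : Fin ν → ℂ)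
    (Trem : Mould (Alpha ν))
    (hTrem : ∀ a : List (Alpha ν), ∃ R : ℕ, ∀ r : ℕ, R ≤ r →
        Trem a = mone a + iterComp (fun b => Sem lam b - mone b) r a) :
    mcomp (Sem lam) Trem = Trem ∧ mcomp Trem (Sem lam) = Trem :=
  trem_fixed_point_general lam Trem hTrem

end
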